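/- Let 𝒜 be a commutative Banach algebra. Then UCB(𝒜) is topologically introverted: for every m ∈ UCB(𝒜)* and T ∈ UCB(𝒜), the functional m⊙T defined by ⟨m⊙T, u⟩ = ⟨m, u·T⟩ belongs to UCB(𝒜). Moreover, for T = u·T₁ with u ∈ 𝒜 and T₁ ∈ 𝒜*, one has m⊙T = u·(m⊙T₁). -/

import Mathlib

open NormedSpace

/-- The dual module action: `⟨u·T, v⟩ = ⟨T, v * u⟩`. -/
noncomputable def dualAct {A : Type*} [NormedCommRing A] [NormedAlgebra ℂ A]
    (u : A) (T : StrongDual ℂ A) : StrongDual ℂ A :=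
  T.comp ((ContinuousLinearMap.mul ℂ A).flip u)

/-- `UCB(A)` as a closed subspace of `A*`: the norm closure of the span of the `u·T`. -/
noncomputable def UCBsub (A : Type*) [NormedCommRing A] [NormedAlgebra ℂ A] :
    Submodule ℂ (StrongDual ℂ A) :=
  (Submodule.span ℂ {S : StrongDual ℂ A | ∃ (v : A) (T : StrongDual ℂ A), S = dualAct v T}).topologicalClosure

/-! For fixed `m`, the map `T ↦ m ⊙ T` is a bounded linear map `X → A*` on any invariant
subspace `X` (`‖m ⊙ T‖ ≤ ‖m‖ ‖T‖`), and it commutes with the action: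
`m ⊙ (v · T₁) = v · (m ⊙ T₁)`. On `UCB(A)` it therefore sends the generators `v · T₁` into `UCB(A)`;
being continuous, it sends their closed span, which is `UCB(A)` itself, into the closed
subspace `UCB(A)`. -/

theorem ContinuousLinearMap.apply_mem_of_apply_generators_mem {R M N : Type*} [Semiring R]
    [TopologicalSpace M] [AddCommMonoid M] [Module R M] [ContinuousConstSMul R M] [ContinuousAdd M]
    [TopologicalSpace N] [AddCommMonoid N] [Module R N] {s : Set M}
    (f : (Submodule.span R s).topologicalClosure →L[R] N) {Y : Submodule R N}
    (hY : IsClosed (Y : Set N))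
    (hs : ∀ y (hy : y ∈ s),
      f ⟨y, (Submodule.span R s).le_topologicalClosure (Submodule.subset_span hy)⟩ ∈ Y)
    (x : (Submodule.span R s).topologicalClosure) : f x ∈ Y := by
  let t : Submodule R M :=
    (Y.comap (f : _ →ₗ[R] N)).map (Submodule.span R s).topologicalClosure.subtype
  have ht : IsClosed (t : Set M) := by
    rw [Submodule.map_coe, Submodule.comap_coe, Submodule.coe_subtype]
    exact (Submodule.span R s).isClosed_topologicalClosure.isClosedMap_subtype_val _
      (hY.preimage f.continuous)
  have hst : Submodule.span R s ≤ t := Submodule.span_le.mpr fun y hy => ⟨⟨y, _⟩, hs y hy, rfl⟩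
  obtain ⟨y, hy, hyx⟩ := (Submodule.span R s).topologicalClosure_minimal hst ht x.2
  rwa [Subtype.ext hyx] at hy

section

variable {A : Type*} [NormedCommRing A] [NormedAlgebra ℂ A]

theorem dualAct_apply (u : A) (T : StrongDual ℂ A) (v : A) : dualAct u T v = T (v * u) := rfl

theorem dualAct_dualAct (u v : A) (T : StrongDual ℂ A) :
    dualAct u (dualAct v T) = dualAct (u * v) T := by
  ext w
  simp only [dualAct_apply, mul_assoc]

theorem norm_dualAct_le (u : A) (T : StrongDual ℂ A) : ‖dualAct u T‖ ≤ ‖T‖ * ‖u‖ :=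
  (dualAct u T).opNorm_le_bound (mul_nonneg (norm_nonneg T) (norm_nonneg u)) fun v => calc
    ‖dualAct u T v‖ ≤ ‖T‖ * ‖v * u‖ := T.le_opNorm _
    _ ≤ ‖T‖ * (‖u‖ * ‖v‖) := by gcongr; exact (norm_mul_le v u).trans_eq (mul_comm _ _)
    _ = ‖T‖ * ‖u‖ * ‖v‖ := (mul_assoc _ _ _).symm

variable {X : Submodule ℂ (StrongDual ℂ A)}

/-- `m ⊙ T`, defined for every `T` whose orbit `u · T` lies in `X`, not only for `T ∈ X`. -/
noncomputable def odot (m : X →L[ℂ] ℂ) (T : StrongDual ℂ A) (hT : ∀ u, dualAct u T ∈ X) :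
    StrongDual ℂ A :=
  m.comp (((ContinuousLinearMap.compL ℂ A A ℂ T).comp
    (ContinuousLinearMap.mul ℂ A).flip).codRestrict X hT)

theorem odot_apply (m : X →L[ℂ] ℂ) (T : StrongDual ℂ A) (hT : ∀ u, dualAct u T ∈ X) (u : A) :
    odot m T hT u = m ⟨dualAct u T, hT u⟩ := rfl

theorem odot_dualAct (m : X →L[ℂ] ℂ) (v : A) (T : StrongDual ℂ A) (hT : ∀ u, dualAct u T ∈ X)
    (hvT : ∀ u, dualAct u (dualAct v T) ∈ X) :
    odot m (dualAct v T) hvT = dualAct v (odot m T hT) := by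
  ext u
  simp only [odot_apply, dualAct_apply, dualAct_dualAct]

theorem norm_odot_le {m : X →L[ℂ] ℂ} {C : ℝ} (hC : 0 ≤ C) (hm : ∀ S, ‖m S‖ ≤ C * ‖S‖)
    (T : StrongDual ℂ A) (hT : ∀ u, dualAct u T ∈ X) : ‖odot m T hT‖ ≤ C * ‖T‖ :=
  ContinuousLinearMap.opNorm_le_bound _ (mul_nonneg hC (norm_nonneg T)) fun u => calc
    ‖m ⟨dualAct u T, hT u⟩‖ ≤ C * ‖dualAct u T‖ := hm _
    _ ≤ C * (‖T‖ * ‖u‖) := by gcongr; exact norm_dualAct_le u T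
    _ = C * ‖T‖ * ‖u‖ := (mul_assoc _ _ _).symm

noncomputable def odotCLM (hX : ∀ u, ∀ T ∈ X, dualAct u T ∈ X) (m : X →L[ℂ] ℂ) :
    X →L[ℂ] StrongDual ℂ A :=
  LinearMap.mkContinuousOfExistsBound
    { toFun := fun x : X => odot m x (fun u => hX u x x.2)
      map_add' := fun x y => by
        ext u
        rw [add_apply, odot_apply, odot_apply, odot_apply, ← map_add]
        exact congrArg m (Subtype.ext (ContinuousLinearMap.add_comp _ _ _))
      map_smul' := fun c x => by
        ext u
        rw [smul_apply, odot_apply, odot_apply, RingHom.id_apply, ← map_smul]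
        exact congrArg m (Subtype.ext (ContinuousLinearMap.smul_comp _ _ _)) }
    (by
      -- unification does not find the normed structure of `↥X` through `StrongDual` unaided
      obtain ⟨C, hC, hm⟩ := ContinuousLinearMap.bound (E := X) (𝕜 := ℂ) (𝕜₂ := ℂ) m
      refine ⟨C, fun x => ?_⟩
      exact norm_odot_le hC.le hm x.1 (fun u => hX u x x.2))

theorem odotCLM_apply (hX : ∀ u, ∀ T ∈ X, dualAct u T ∈ X) (m : X →L[ℂ] ℂ) (x : X) :
    odotCLM hX m x = odot m x (fun u => hX u x x.2) := rfl

end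

theorem UCB_topologically_introverted_general (A : Type*) [NormedCommRing A] [NormedAlgebra ℂ A]
    (hinv : ∀ (u : A) (S : StrongDual ℂ A), S ∈ UCBsub A → dualAct u S ∈ UCBsub A)
    (hgen : ∀ (w : A) (T₁ : StrongDual ℂ A), dualAct w T₁ ∈ UCBsub A)
    (m : (UCBsub A) →L[ℂ] ℂ) (T : StrongDual ℂ A) (hT : T ∈ UCBsub A)
    (S : StrongDual ℂ A) (hS : ∀ u : A, S u = m ⟨dualAct u T, hinv u T hT⟩) :
    S ∈ UCBsub A ∧
      ∀ (u : A) (T₁ : StrongDual ℂ A) (S₁ : StrongDual ℂ A), T = dualAct u T₁ →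
        (∀ w : A, S₁ w = m ⟨dualAct w T₁, hgen w T₁⟩) → S = dualAct u S₁ := by
  have hS_odot : S = odot m T (hinv · T hT) := ContinuousLinearMap.ext hS
  refine ⟨?_, fun u T₁ S₁ hT₁ hS₁ => ?_⟩
  · rw [hS_odot, ← odotCLM_apply hinv m ⟨T, hT⟩]
    refine (odotCLM hinv m).apply_mem_of_apply_generators_mem
      (Submodule.isClosed_topologicalClosure _) ?_ _
    rintro _ ⟨v, T₁, rfl⟩
    have h_generator :
        odotCLM hinv m ⟨dualAct v T₁, hgen v T₁⟩ = dualAct v (odot m T₁ (hgen · T₁)) :=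
      odot_dualAct m v T₁ _ _
    exact h_generator ▸ hgen v _
  · have hS₁_odot : S₁ = odot m T₁ (hgen · T₁) := ContinuousLinearMap.ext hS₁
    subst hT₁ hS₁_odot
    rw [hS_odot, odot_dualAct]

/-- `UCB(A)` is topologically introverted: for `m ∈ UCB(A)*` and `T ∈ UCB(A)`,
the functional `m⊙T` given by `⟨m⊙T, u⟩ = ⟨m, u·T⟩` lies in `UCB(A)`; moreover if
`T = u·T₁` then `m⊙T = u·(m⊙T₁)`. -/
theorem UCB_topologically_introverted (A : Type*) [NormedCommRing A] [NormedAlgebra ℂ A]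
    [CompleteSpace A]
    (hinv : ∀ (u : A) (S : StrongDual ℂ A), S ∈ UCBsub A → dualAct u S ∈ UCBsub A)
    (hgen : ∀ (w : A) (T₁ : StrongDual ℂ A), dualAct w T₁ ∈ UCBsub A)
    (m : (UCBsub A) →L[ℂ] ℂ) (T : StrongDual ℂ A) (hT : T ∈ UCBsub A)
    (S : StrongDual ℂ A) (hS : ∀ u : A, S u = m ⟨dualAct u T, hinv u T hT⟩) :
    S ∈ UCBsub A ∧
      ∀ (u : A) (T₁ : StrongDual ℂ A) (S₁ : StrongDual ℂ A), T = dualAct u T₁ →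
        (∀ w : A, S₁ w = m ⟨dualAct w T₁, hgen w T₁⟩) → S = dualAct u S₁ :=
  UCB_topologically_introverted_general A hinv hgen m T hT S hS
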